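/- Let Z ∈ ℝ^{N×M} be nonnegative with positive row sums and positive column sums, let D_P and D_Q be the diagonal matrices of row sums and column sums of Z, and L̃ the normalized Laplacian of the bipartite graph B = [[0,Z],[Zᵀ,0]]. Then for F = [P; Q] with P ∈ ℝ^{N×K}, Q ∈ ℝ^{M×K}: tr(Fᵀ L̃ F) = Σ_{i=1}^N Σ_{j=1}^M Z_{ij} · ‖ pᵢ/√(D_P(i,i)) − qⱼ/√(D_Q(j,j)) ‖₂², where pᵢ and qⱼ denote the i-th row of P and j-th row of Q. -/

import Mathlib

open Matrix Finset

/-!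
Both sides are quadratic in `F = [P; Q]`. Writing `a = D_P^{-1/2}`, `b = D_Q^{-1/2}`, the left side is
`‖F‖² - 2 Σᵢⱼₖ aᵢ Zᵢⱼ bⱼ Pᵢₖ Qⱼₖ`, since the off-diagonal blocks of `D^{-1/2} B D^{-1/2}` each contribute
the cross term once. Expanding the squares on the right gives the same cross term, and the square terms
collapse to `‖P‖² + ‖Q‖²` because `aᵢ² D_P(i,i) = 1` and `bⱼ² D_Q(j,j) = 1`.
-/

namespace Matrix

variable {m n o R : Type*} [Fintype m] [Fintype n] [Fintype o] [CommRing R]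

theorem trace_transpose_mul_self (A : Matrix m n R) :
    (Aᵀ * A).trace = ∑ i, ∑ k, A i k ^ 2 := by
  simp only [trace, diag, mul_apply, transpose_apply, sq]
  rw [Finset.sum_comm]

theorem trace_transpose_mul_mul (A : Matrix m o R) (X : Matrix m n R) (B : Matrix n o R) :
    (Aᵀ * X * B).trace = ∑ i, ∑ j, X i j * ∑ k, A i k * B j k := by
  simp only [trace, diag, mul_apply, transpose_apply, Finset.sum_mul, Finset.mul_sum]
  rw [Finset.sum_comm]
  refine (Finset.sum_congr rfl fun j _ => Finset.sum_comm).trans ?_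
  rw [Finset.sum_comm]
  refine Finset.sum_congr rfl fun i _ => Finset.sum_congr rfl fun j _ =>
    Finset.sum_congr rfl fun k _ => by ring

variable [DecidableEq m] [DecidableEq n]

theorem trace_fromRows_transpose_mul_scaled_fromBlocks_mul_fromRows (Z : Matrix m n R)
    (a : m → R) (b : n → R) (P : Matrix m o R) (Q : Matrix n o R) :
    ((fromRows P Q)ᵀ * (diagonal (Sum.elim a b) * fromBlocks 0 Z Zᵀ 0 *
        diagonal (Sum.elim a b)) * fromRows P Q).trace =
      2 * ∑ i, ∑ j, a i * Z i j * b j * ∑ k, P i k * Q j k := by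
  rw [trace_transpose_mul_mul]
  simp only [Fintype.sum_sum_type, mul_diagonal, diagonal_mul, Sum.elim_inl, Sum.elim_inr,
    fromBlocks_apply₁₁, fromBlocks_apply₁₂, fromBlocks_apply₂₁, fromBlocks_apply₂₂,
    fromRows_apply_inl, fromRows_apply_inr, transpose_apply, zero_apply, mul_zero, zero_mul,
    Finset.sum_const_zero, zero_add, add_zero]
  rw [Finset.sum_comm (f := fun j i => b j * Z i j * a i * _), two_mul]
  congr 1
  refine Finset.sum_congr rfl fun i _ => Finset.sum_congr rfl fun j _ => ?_
  simp only [mul_comm (Q j _)]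
  ring

end Matrix

theorem sum_mul_sum_sub_sq_eq {m n o R : Type*} [Fintype m] [Fintype n] [Fintype o] [CommRing R]
    (Z : Matrix m n R) (a : m → R) (b : n → R) (P : Matrix m o R) (Q : Matrix n o R) :
    ∑ i, ∑ j, Z i j * ∑ k, (a i * P i k - b j * Q j k) ^ 2 =
      ∑ i, a i ^ 2 * (∑ j, Z i j) * ∑ k, P i k ^ 2 + ∑ j, b j ^ 2 * (∑ i, Z i j) * ∑ k, Q j k ^ 2
        - 2 * ∑ i, ∑ j, a i * Z i j * b j * ∑ k, P i k * Q j k := by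
  have expand : ∀ i j, Z i j * ∑ k, (a i * P i k - b j * Q j k) ^ 2 =
      a i ^ 2 * Z i j * ∑ k, P i k ^ 2 + b j ^ 2 * Z i j * ∑ k, Q j k ^ 2
        - 2 * (a i * Z i j * b j * ∑ k, P i k * Q j k) := by
    intro i j
    simp only [Finset.mul_sum, ← Finset.sum_add_distrib, ← Finset.sum_sub_distrib]
    exact Finset.sum_congr rfl fun k _ => by ring
  simp only [expand, Finset.sum_sub_distrib, Finset.sum_add_distrib, ← Finset.mul_sum]
  rw [Finset.sum_comm (f := fun i j => b j ^ 2 * Z i j * _)]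
  congr 2 <;> refine Finset.sum_congr rfl fun _ _ => by rw [← Finset.sum_mul, ← Finset.mul_sum]

theorem bipartite_laplacian_trace_identity_general
    (N M K : ℕ) (Z : Matrix (Fin N) (Fin M) ℝ)
    (hrow : ∀ i, 0 < ∑ j, Z i j) (hcol : ∀ j, 0 < ∑ i, Z i j)
    (P : Matrix (Fin N) (Fin K) ℝ) (Q : Matrix (Fin M) (Fin K) ℝ) :
    let dP : Fin N → ℝ := fun i => ∑ j, Z i j
    let dQ : Fin M → ℝ := fun j => ∑ i, Z i j
    let B : Matrix (Fin N ⊕ Fin M) (Fin N ⊕ Fin M) ℝ := Matrix.fromBlocks 0 Z Zᵀ 0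
    let Dinvhalf : Matrix (Fin N ⊕ Fin M) (Fin N ⊕ Fin M) ℝ :=
      Matrix.diagonal (Sum.elim (fun i => 1 / Real.sqrt (dP i))
        (fun j => 1 / Real.sqrt (dQ j)))
    let L : Matrix (Fin N ⊕ Fin M) (Fin N ⊕ Fin M) ℝ := 1 - Dinvhalf * B * Dinvhalf
    let F : Matrix (Fin N ⊕ Fin M) (Fin K) ℝ := Matrix.fromRows P Q
    (Fᵀ * L * F).trace =
      ∑ i, ∑ j, Z i j *
        ∑ k, (P i k / Real.sqrt (dP i) - Q j k / Real.sqrt (dQ j)) ^ 2 := by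
  intro dP dQ B Dinvhalf L F
  have normalized {d : ℝ} (hd : 0 < d) : (1 / √d) ^ 2 * d = 1 := by
    rw [div_pow, one_pow, Real.sq_sqrt hd.le, one_div_mul_cancel hd.ne']
  show (Fᵀ * (1 - Dinvhalf * B * Dinvhalf) * F).trace = _
  rw [Matrix.mul_sub, Matrix.sub_mul, Matrix.mul_one, trace_sub, trace_transpose_mul_self,
    trace_fromRows_transpose_mul_scaled_fromBlocks_mul_fromRows]
  have rescale : ∀ i j k, P i k / √(dP i) - Q j k / √(dQ j) =
      1 / √(dP i) * P i k - 1 / √(dQ j) * Q j k := fun _ _ _ => by ring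
  simp only [rescale]
  rw [sum_mul_sum_sub_sq_eq]
  simp only [F, dP, dQ, Fintype.sum_sum_type, fromRows_apply_inl, fromRows_apply_inr,
    normalized (hrow _), normalized (hcol _), one_mul]

/-- trace identity for the bipartite normalized Laplacian:
tr(Fᵀ L̃ F) = Σᵢⱼ Zᵢⱼ ‖pᵢ/√D_P(i,i) − qⱼ/√D_Q(j,j)‖², F = [P;Q]. -/
theorem bipartite_laplacian_trace_identity
    (N M K : ℕ) (Z : Matrix (Fin N) (Fin M) ℝ)
    (hZ : ∀ i j, 0 ≤ Z i j)
    (hrow : ∀ i, 0 < ∑ j, Z i j) (hcol : ∀ j, 0 < ∑ i, Z i j)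
    (P : Matrix (Fin N) (Fin K) ℝ) (Q : Matrix (Fin M) (Fin K) ℝ) :
    let dP : Fin N → ℝ := fun i => ∑ j, Z i j
    let dQ : Fin M → ℝ := fun j => ∑ i, Z i j
    let B : Matrix (Fin N ⊕ Fin M) (Fin N ⊕ Fin M) ℝ := Matrix.fromBlocks 0 Z Zᵀ 0
    let Dinvhalf : Matrix (Fin N ⊕ Fin M) (Fin N ⊕ Fin M) ℝ :=
      Matrix.diagonal (Sum.elim (fun i => 1 / Real.sqrt (dP i))
        (fun j => 1 / Real.sqrt (dQ j)))
    let L : Matrix (Fin N ⊕ Fin M) (Fin N ⊕ Fin M) ℝ := 1 - Dinvhalf * B * Dinvhalf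
    let F : Matrix (Fin N ⊕ Fin M) (Fin K) ℝ := Matrix.fromRows P Q
    (Fᵀ * L * F).trace =
      ∑ i, ∑ j, Z i j *
        ∑ k, (P i k / Real.sqrt (dP i) - Q j k / Real.sqrt (dQ j)) ^ 2 :=
  bipartite_laplacian_trace_identity_general N M K Z hrow hcol P Q
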